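/- arXiv:2102.03967 — 2 statements merged into one kernel-verified Lean document; each statement's English description precedes it below -/
import Mathlib

section
/- Let C be a chain complex and D' ⊆ D graded abelian subgroups of C. Then the induced chain map Inf(D,C)/Inf(D',C) → Sup(D,C)/Sup(D',C) induces an isomorphism on homology in every degree. -/
/-- Oriented `n`-simplices on a vertex set `V`: finsets of cardinality `n+1`. -/
abbrev Simp (V : Type) (n : ℕ) : Type := {σ : Finset V // σ.card = n + 1}

/-- The group of `n`-chains with coefficients in `G` on the full simplex on `V`. -/
abbrev Ch (V : Type) (G : Type) [AddCommGroup G] (n : ℕ) : Type := Simp V n →₀ G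

/-- Boundary of a single `(n+1)`-simplex with coefficient `g`. -/
noncomputable def bdryFun (V : Type) [LinearOrder V] (G : Type) [AddCommGroup G]
    (n : ℕ) (σ : Simp V (n + 1)) (g : G) : Ch V G n :=
  ∑ v ∈ σ.1.attach, Finsupp.single
    ⟨σ.1.erase v.1, by rw [Finset.card_erase_of_mem v.2, σ.2]; omega⟩
    (((-1 : ℤ) ^ ((σ.1.filter fun w => w < v.1).card)) • g)

/-- The simplicial boundary homomorphism `C_{n+1} → C_n`. -/
noncomputable def bdry (V : Type) [LinearOrder V] (G : Type) [AddCommGroup G]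
    (n : ℕ) : Ch V G (n + 1) →+ Ch V G n :=
  Finsupp.liftAddHom fun σ =>
    { toFun := bdryFun V G n σ
      map_zero' := by simp [bdryFun]
      map_add' := fun a b => by
        simp [bdryFun, smul_add, Finsupp.single_add, Finset.sum_add_distrib] }

/-- The subgroup `G(K)_n ⊆ C_n` of chains supported on the `n`-hyperedges of `K`. -/
def chainsOn (V : Type) [LinearOrder V] (G : Type) [AddCommGroup G]
    (K : Set (Finset V)) (n : ℕ) : AddSubgroup (Ch V G n) where
  carrier := {c | ∀ σ ∈ c.support, (σ : Simp V n).1 ∈ K}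
  zero_mem' := by simp
  add_mem' := by
    intro a b ha hb σ hσ
    rcases Finset.mem_union.mp (Finsupp.support_add hσ) with h | h
    exacts [ha σ h, hb σ h]
  neg_mem' := by
    intro a ha σ hσ
    exact ha σ (by simpa using hσ)

section Generic

variable {C : ℕ → Type} [∀ n, AddCommGroup (C n)]

/-- The infimum chain complex of a graded subgroup `D` inside `(C, d)`. -/
def InfC (d : ∀ n, C (n + 1) →+ C n) (D : ∀ n, AddSubgroup (C n)) :
    ∀ n, AddSubgroup (C n)
  | 0 => D 0
  | (n + 1) => D (n + 1) ⊓ (D n).comap (d n)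

/-- The supremum chain complex of a graded subgroup `D` inside `(C, d)`. -/
def SupC (d : ∀ n, C (n + 1) →+ C n) (D : ∀ n, AddSubgroup (C n)) (n : ℕ) :
    AddSubgroup (C n) :=
  D n ⊔ (D (n + 1)).map (d n)

/-- Relative cycles of the pair of graded subgroups `(K, L)`. -/
def relZ (d : ∀ n, C (n + 1) →+ C n) (K L : ∀ n, AddSubgroup (C n)) :
    ∀ n, AddSubgroup (C n)
  | 0 => K 0
  | (n + 1) => K (n + 1) ⊓ (L n).comap (d n)

/-- Relative boundaries of the pair of graded subgroups `(K, L)`. -/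
def relB (d : ∀ n, C (n + 1) →+ C n) (K L : ∀ n, AddSubgroup (C n)) (n : ℕ) :
    AddSubgroup (C n) :=
  ((K (n + 1)).map (d n) ⊔ L n) ⊓ relZ d K L n

/-- Relative homology of the pair `(K, L)`, i.e. the homology of the quotient chain
complex `K/L`.  (Taking `L = ⊥` gives the absolute homology of `K`.) -/
abbrev relH (d : ∀ n, C (n + 1) →+ C n) (K L : ∀ n, AddSubgroup (C n)) (n : ℕ) : Type _ :=
  relZ d K L n ⧸ (relB d K L n).addSubgroupOf (relZ d K L n)

theorem relZ_mono (d : ∀ n, C (n + 1) →+ C n) {K L K' L' : ∀ n, AddSubgroup (C n)}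
    (hK : ∀ n, K n ≤ K' n) (hL : ∀ n, L n ≤ L' n) :
    ∀ n, relZ d K L n ≤ relZ d K' L' n
  | 0 => hK 0
  | (n + 1) => inf_le_inf (hK (n + 1)) (AddSubgroup.comap_mono (hL n))

theorem relB_mono (d : ∀ n, C (n + 1) →+ C n) {K L K' L' : ∀ n, AddSubgroup (C n)}
    (hK : ∀ n, K n ≤ K' n) (hL : ∀ n, L n ≤ L' n) (n : ℕ) :
    relB d K L n ≤ relB d K' L' n :=
  inf_le_inf (sup_le_sup (AddSubgroup.map_mono (hK (n + 1))) (hL n))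
    (relZ_mono d hK hL n)

/-- The map on relative homology induced by an inclusion of pairs. -/
noncomputable def inducedRelMap (d : ∀ n, C (n + 1) →+ C n)
    {K L K' L' : ∀ n, AddSubgroup (C n)}
    (hK : ∀ n, K n ≤ K' n) (hL : ∀ n, L n ≤ L' n) (n : ℕ) :
    relH d K L n →+ relH d K' L' n :=
  QuotientAddGroup.map _ _ (AddSubgroup.inclusion (relZ_mono d hK hL n)) (by
    intro x hx
    simp only [AddSubgroup.mem_comap, AddSubgroup.mem_addSubgroupOf,
      AddSubgroup.coe_inclusion] at hx ⊢
    exact relB_mono d hK hL n hx)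

theorem InfC_le_SupC (d : ∀ n, C (n + 1) →+ C n) (D : ∀ n, AddSubgroup (C n)) :
    ∀ n, InfC d D n ≤ SupC d D n := by
  intro n
  cases n with
  | zero => exact le_sup_left
  | succ n => exact le_trans inf_le_left le_sup_left

theorem InfC_mono (d : ∀ n, C (n + 1) →+ C n) {D D' : ∀ n, AddSubgroup (C n)}
    (h : ∀ n, D n ≤ D' n) : ∀ n, InfC d D n ≤ InfC d D' n
  | 0 => h 0
  | (n + 1) => inf_le_inf (h (n + 1)) (AddSubgroup.comap_mono (h n))

end Generic

theorem chainsOn_mono (V : Type) [LinearOrder V] (G : Type) [AddCommGroup G]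
    {K K' : Set (Finset V)} (h : K ⊆ K') (n : ℕ) :
    chainsOn V G K n ≤ chainsOn V G K' n := by
  intro c hc σ hσ
  exact h (hc σ hσ)

/-! Because `d ∘ d = 0`, `d Sup(D)_{n+1} + Sup(D')_n = d D_{n+1} + D'_n`, and the relative cycles
of `Inf(D)/Inf(D')` are exactly those of `D/D'`. If such a cycle is `x = d a + e` with `a ∈ D`,
`e ∈ D'`, then `d a = x - e ∈ D` and `d e = d x ∈ D'`, so `a ∈ Inf(D)` and `e ∈ Inf(D')`: this
is injectivity. For surjectivity, a relative cycle `u + d a` of `Sup(D)/Sup(D')` with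
`d u = v + d c` (`v, c ∈ D'`) is the relative cycle `u - c` of `D/D'` plus
`d a + c ∈ d D_{n+1} + D'_n`. -/

section InfSup

variable {C : ℕ → Type} [∀ n, AddCommGroup (C n)] (d : ∀ n, C (n + 1) →+ C n)

theorem inducedRelMap_injective {K L K' L' : ∀ n, AddSubgroup (C n)}
    (hK : ∀ n, K n ≤ K' n) (hL : ∀ n, L n ≤ L' n) (n : ℕ)
    (h : ((K' (n + 1)).map (d n) ⊔ L' n) ⊓ relZ d K L n ≤ (K (n + 1)).map (d n) ⊔ L n) :
    Function.Injective (inducedRelMap d hK hL n) := by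
  rw [injective_iff_map_eq_zero]
  intro q hq
  induction q using QuotientAddGroup.induction_on with
  | H z =>
    rw [inducedRelMap, QuotientAddGroup.map_mk, QuotientAddGroup.eq_zero_iff,
      AddSubgroup.mem_addSubgroupOf, AddSubgroup.coe_inclusion] at hq
    rw [QuotientAddGroup.eq_zero_iff, AddSubgroup.mem_addSubgroupOf]
    exact ⟨h ⟨hq.1, z.2⟩, z.2⟩

theorem inducedRelMap_surjective {K L K' L' : ∀ n, AddSubgroup (C n)}
    (hK : ∀ n, K n ≤ K' n) (hL : ∀ n, L n ≤ L' n) (n : ℕ)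
    (h : relZ d K' L' n ≤ relZ d K L n ⊔ ((K' (n + 1)).map (d n) ⊔ L' n)) :
    Function.Surjective (inducedRelMap d hK hL n) := by
  intro q
  induction q using QuotientAddGroup.induction_on with
  | H y =>
    obtain ⟨x, hx, b, hb, hxb⟩ := AddSubgroup.mem_sup.mp (h y.2)
    refine ⟨QuotientAddGroup.mk ⟨x, hx⟩, ?_⟩
    rw [inducedRelMap, QuotientAddGroup.map_mk, QuotientAddGroup.eq_iff_sub_mem,
      AddSubgroup.mem_addSubgroupOf]
    have hbxy : -b = x - y := by rw [← hxb]; abel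
    simp only [AddSubgroup.coe_sub, AddSubgroup.coe_inclusion]
    rw [← hbxy]
    exact AddSubgroup.mem_inf.mpr ⟨neg_mem hb, hbxy ▸ sub_mem (relZ_mono d hK hL n hx) y.2⟩

theorem relZ_le (K L : ∀ n, AddSubgroup (C n)) : ∀ n, relZ d K L n ≤ K n
  | 0 => le_rfl
  | _ + 1 => inf_le_left

variable {d}

theorem map_SupC_succ (hdd : ∀ n x, d n (d (n + 1) x) = 0)
    (D : ∀ n, AddSubgroup (C n)) (n : ℕ) :
    (SupC d D (n + 1)).map (d n) = (D (n + 1)).map (d n) := by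
  rw [SupC, AddSubgroup.map_sup, AddSubgroup.map_map, sup_eq_left]
  rintro _ ⟨x, -, rfl⟩
  rw [AddMonoidHom.comp_apply, hdd]
  exact zero_mem _

theorem map_SupC_sup_SupC (hdd : ∀ n x, d n (d (n + 1) x) = 0)
    {D D' : ∀ n, AddSubgroup (C n)} (hD : ∀ n, D' n ≤ D n) (n : ℕ) :
    (SupC d D (n + 1)).map (d n) ⊔ SupC d D' n = (D (n + 1)).map (d n) ⊔ D' n := by
  rw [map_SupC_succ hdd, SupC, ← sup_assoc, sup_right_comm,
    sup_eq_left.mpr (AddSubgroup.map_mono (hD (n + 1)))]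

theorem comap_InfC (hdd : ∀ n x, d n (d (n + 1) x) = 0)
    (D : ∀ n, AddSubgroup (C n)) :
    ∀ n, (InfC d D n).comap (d n) = (D n).comap (d n)
  | 0 => rfl
  | n + 1 => by
    rw [InfC, AddSubgroup.comap_inf, inf_eq_left, AddSubgroup.comap_comap]
    intro x _
    simp [hdd]

theorem relZ_InfC_InfC (hdd : ∀ n x, d n (d (n + 1) x) = 0)
    {D D' : ∀ n, AddSubgroup (C n)} (hD : ∀ n, D' n ≤ D n) :
    ∀ n, relZ d (InfC d D) (InfC d D') n = relZ d D D' n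
  | 0 => rfl
  | n + 1 => by
    rw [relZ, relZ, comap_InfC hdd, InfC, inf_assoc, inf_eq_right.mpr
      (AddSubgroup.comap_mono (hD n))]

theorem sup_inf_relZ_le_map_InfC_sup_InfC (hdd : ∀ n x, d n (d (n + 1) x) = 0)
    {D D' : ∀ n, AddSubgroup (C n)} (hD : ∀ n, D' n ≤ D n) (n : ℕ) :
    ((D (n + 1)).map (d n) ⊔ D' n) ⊓ relZ d D D' n ≤
      (InfC d D (n + 1)).map (d n) ⊔ InfC d D' n := by
  rintro x ⟨hxB, hxZ⟩
  obtain ⟨_, ⟨a, ha, rfl⟩, e, he, rfl⟩ := AddSubgroup.mem_sup.mp hxB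
  have hda : d n a ∈ D n := by
    simpa using sub_mem (relZ_le d D D' n hxZ) (hD n he)
  refine AddSubgroup.add_mem_sup (AddSubgroup.mem_map_of_mem _ ⟨ha, hda⟩) ?_
  cases n with
  | zero => exact he
  | succ m =>
    have hde : d m e ∈ D' m := by simpa [hdd] using hxZ.2
    exact ⟨he, hde⟩

theorem relZ_SupC_SupC_le (hdd : ∀ n x, d n (d (n + 1) x) = 0)
    {D D' : ∀ n, AddSubgroup (C n)} (hD : ∀ n, D' n ≤ D n) :
    ∀ n, relZ d (SupC d D) (SupC d D') n ≤ relZ d D D' n ⊔ ((D (n + 1)).map (d n) ⊔ D' n)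
  | 0 => by
    intro y hy
    obtain ⟨u, hu, _, ⟨a, ha, rfl⟩, rfl⟩ := AddSubgroup.mem_sup.mp hy
    exact AddSubgroup.add_mem_sup hu (AddSubgroup.mem_sup_left (AddSubgroup.mem_map_of_mem _ ha))
  | m + 1 => by
    rintro y ⟨hy, hdy⟩
    obtain ⟨u, hu, _, ⟨a, ha, rfl⟩, rfl⟩ := AddSubgroup.mem_sup.mp hy
    obtain ⟨v, hv, _, ⟨c, hc, rfl⟩, hvc⟩ := AddSubgroup.mem_sup.mp hdy
    have hduc : d m (u - c) = v := by
      rw [map_sub, ← add_sub_cancel_right v (d m c), hvc, map_add, hdd, add_zero]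
    rw [show u + d (m + 1) a = (u - c) + (d (m + 1) a + c) by abel]
    refine AddSubgroup.add_mem_sup ?_
      (AddSubgroup.add_mem_sup (AddSubgroup.mem_map_of_mem _ ha) hc)
    exact AddSubgroup.mem_inf.mpr
      ⟨sub_mem hu (hD _ hc), show d m (u - c) ∈ D' m from hduc ▸ hv⟩

end InfSup

/-- For a chain complex `(C, d)` and graded abelian subgroups
`D' ⊆ D ⊆ C`, the induced chain map `Inf(D,C)/Inf(D',C) → Sup(D,C)/Sup(D',C)`
induces an isomorphism on homology in every degree. -/
theorem relative_inf_sup_homology_iso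
    {C : ℕ → Type} [∀ n, AddCommGroup (C n)]
    (d : ∀ n, C (n + 1) →+ C n) (hdd : ∀ n x, d n (d (n + 1) x) = 0)
    (D D' : ∀ n, AddSubgroup (C n)) (hD : ∀ n, D' n ≤ D n) (n : ℕ) :
    Function.Bijective
      (inducedRelMap d (K := InfC d D) (L := InfC d D')
        (K' := SupC d D) (L' := SupC d D')
        (InfC_le_SupC d D) (InfC_le_SupC d D') n) := by
  refine ⟨inducedRelMap_injective d _ _ n ?_, inducedRelMap_surjective d _ _ n ?_⟩
  all_goals rw [map_SupC_sup_SupC hdd hD, relZ_InfC_InfC hdd hD]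
  · exact sup_inf_relZ_le_map_InfC_sup_InfC hdd hD n
  · exact relZ_SupC_SupC_le hdd hD n
end

section
/- For a hypergraph triple B ⊆ A ⊆ H, the ranks of relative embedded homology satisfy rank H_n(H, B) ≤ rank H_n(H, A) + rank H_n(A, B) for all n ≥ 0. -/
/-! The homology sequence `H_n(A, B) → H_n(H, B) → H_n(H, A)` of the triple is exact in the
middle. By rank–nullity, `rank H_n(H, B)` is the rank of the image
in `H_n(H, A)` plus the rank of the kernel, which is the image of `H_n(A, B)`. Exactness rests on
`∂ ∘ ∂ = 0`: if a relative cycle of `(H, B)` is `z = ∂w + a` with `a` a chain of `A`, then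
`∂a = ∂z` is a chain of `B`, so `a` is a relative cycle of `(A, B)` homologous to `z` in `(H, B)`. -/

section BoundarySquaresToZero

variable {V : Type} {G : Type} [AddCommGroup G]

-- Lets iterated boundaries be written without cardinality proofs.
noncomputable def singleSimplex (n : ℕ) (s : Finset V) (g : G) : Ch V G n :=
  if h : s.card = n + 1 then Finsupp.single ⟨s, h⟩ g else 0

lemma singleSimplex_add (n : ℕ) (s : Finset V) (a b : G) :
    singleSimplex n s a + singleSimplex n s b = singleSimplex n s (a + b) := by
  unfold singleSimplex
  split_ifs <;> simp [Finsupp.single_add]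

lemma singleSimplex_zero (n : ℕ) (s : Finset V) : singleSimplex n s (0 : G) = 0 := by
  unfold singleSimplex
  split_ifs <;> simp

variable [LinearOrder V]

lemma card_filter_lt_erase_of_not_lt {σ : Finset V} {u v : V} (h : ¬ v < u) :
    ((σ.erase v).filter (· < u)).card = (σ.filter (· < u)).card := by
  rw [Finset.filter_erase, Finset.erase_eq_of_notMem (by simp [h])]

lemma card_filter_lt_eq_card_filter_lt_erase_add_one {σ : Finset V} {u v : V} (h : u < v)
    (hu : u ∈ σ) :
    (σ.filter (· < v)).card = ((σ.erase u).filter (· < v)).card + 1 := by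
  rw [Finset.filter_erase, Finset.card_erase_of_mem (by simp [hu, h]),
    Nat.sub_add_cancel (Finset.card_pos.2 ⟨u, by simp [hu, h]⟩)]

/-- Removing `v` then `u` and removing `u` then `v` produce opposite signs. -/
lemma neg_one_pow_erase_mul_neg_one_pow_swap {σ : Finset V} {u v : V} (hu : u ∈ σ)
    (hv : v ∈ σ) (hne : u ≠ v) :
    (-1 : ℤ) ^ ((σ.erase v).filter (· < u)).card * (-1) ^ (σ.filter (· < v)).card =
      -((-1) ^ ((σ.erase u).filter (· < v)).card * (-1) ^ (σ.filter (· < u)).card) := by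
  rcases hne.lt_or_gt with h | h
  · rw [card_filter_lt_erase_of_not_lt (not_lt.2 h.le),
      card_filter_lt_eq_card_filter_lt_erase_add_one h hu, pow_succ]
    ring
  · rw [card_filter_lt_erase_of_not_lt (not_lt.2 h.le),
      card_filter_lt_eq_card_filter_lt_erase_add_one h hv, pow_succ]
    ring

lemma bdry_single (n : ℕ) (σ : Simp V (n + 1)) (g : G) :
    bdry V G n (Finsupp.single σ g) = bdryFun V G n σ g := by
  rw [bdry, Finsupp.liftAddHom_apply_single]
  rfl

lemma bdry_singleSimplex (n : ℕ) (s : Finset V) (g : G) :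
    bdry V G n (singleSimplex (n + 1) s g) =
      ∑ v ∈ s, singleSimplex n (s.erase v) ((-1 : ℤ) ^ (s.filter (· < v)).card • g) := by
  unfold singleSimplex
  split_ifs with hs
  · rw [bdry_single, bdryFun, ← Finset.sum_attach s]
    refine Finset.sum_congr rfl fun v _ => ?_
    rw [dif_pos (by rw [Finset.card_erase_of_mem v.2, hs]; omega)]
  · rw [map_zero, eq_comm]
    refine Finset.sum_eq_zero fun v hv => dif_neg ?_
    have := Finset.card_pos.2 ⟨v, hv⟩
    rw [Finset.card_erase_of_mem hv]
    omega

lemma bdry_bdry_singleSimplex (n : ℕ) (s : Finset V) (g : G) :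
    bdry V G n (bdry V G (n + 1) (singleSimplex (n + 2) s g)) = 0 := by
  let term : V × V → Ch V G n := fun p => singleSimplex n ((s.erase p.1).erase p.2)
    ((-1 : ℤ) ^ ((s.erase p.1).filter (· < p.2)).card •
      (-1 : ℤ) ^ (s.filter (· < p.1)).card • g)
  have expand : bdry V G n (bdry V G (n + 1) (singleSimplex (n + 2) s g)) =
      ∑ p ∈ s.offDiag, term p := by
    rw [bdry_singleSimplex, map_sum,
      Finset.sum_finset_product s.offDiag s (fun v => s.erase v) (by simp only [Finset.mem_offDiag, Finset.mem_erase]; tauto)]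
    exact Finset.sum_congr rfl fun v _ => bdry_singleSimplex n _ _
  -- the terms of `(u, v)` and `(v, u)` cancel
  rw [expand]
  refine Finset.sum_involution (fun p _ => p.swap) (fun p hp => ?_)
    (fun p hp _ hswap => (Finset.mem_offDiag.1 hp).2.2 (congrArg Prod.fst hswap).symm)
    (fun p hp => by obtain ⟨hu, hv, hne⟩ := Finset.mem_offDiag.1 hp; simp [hu, hv, Ne.symm hne])
    (fun p _ => rfl)
  obtain ⟨hu, hv, hne⟩ := Finset.mem_offDiag.1 hp
  simp only [term, Prod.fst_swap, Prod.snd_swap, Finset.erase_right_comm (a := p.2),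
    singleSimplex_add, smul_smul, neg_one_pow_erase_mul_neg_one_pow_swap hv hu (Ne.symm hne),
    neg_smul, neg_add_cancel, singleSimplex_zero]

lemma bdry_bdry (n : ℕ) (c : Ch V G (n + 2)) : bdry V G n (bdry V G (n + 1) c) = 0 := by
  induction c using Finsupp.induction with
  | zero => simp
  | single_add σ g c _ _ ih =>
    have : Finsupp.single σ g = singleSimplex (n + 2) σ.1 g := by rw [singleSimplex, dif_pos σ.2]
    rw [map_add, map_add, this, bdry_bdry_singleSimplex, ih, add_zero]

end BoundarySquaresToZero

section RelativeHomology

variable {C : ℕ → Type} [∀ n, AddCommGroup (C n)] (d : ∀ n, C (n + 1) →+ C n)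

lemma mem_relZ_of_add_bdry (hd : ∀ n x, d n (d (n + 1) x) = 0) {K L M : ∀ n, AddSubgroup (C n)}
    {n : ℕ} {z a : C n} {w : C (n + 1)} (hz : z ∈ relZ d K M n) (ha : a ∈ L n)
    (hwa : d n w + a = z) : a ∈ relZ d L M n := by
  cases n with
  | zero => exact ha
  | succ n =>
    refine ⟨ha, ?_⟩
    show d n a ∈ M n
    rw [← zero_add (d n a), ← hd n w, ← map_add, hwa]
    exact hz.2

/-- The two maps are those of the homology sequence `H_n(L, M) → H_n(K, M) → H_n(K, L)` of the
triple `M ≤ L ≤ K`. -/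
theorem ker_inducedRelMap_le_range (hd : ∀ n x, d n (d (n + 1) x) = 0)
    {K L M : ∀ n, AddSubgroup (C n)} (hML : ∀ n, M n ≤ L n) (hLK : ∀ n, L n ≤ K n) (n : ℕ) :
    (inducedRelMap d (fun n => le_refl (K n)) hML n).ker ≤
      (inducedRelMap d hLK (fun n => le_refl (M n)) n).range := by
  intro x hx
  obtain ⟨z, rfl⟩ := QuotientAddGroup.mk_surjective x
  have hzB : (z : C n) ∈ relB d K L n := by
    rwa [AddMonoidHom.mem_ker, inducedRelMap, QuotientAddGroup.map_mk,
      QuotientAddGroup.eq_zero_iff, AddSubgroup.mem_addSubgroupOf] at hx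
  obtain ⟨_, ⟨w, hw, rfl⟩, a, ha, hwa⟩ := AddSubgroup.mem_sup.1 hzB.1
  have haZ : a ∈ relZ d L M n := mem_relZ_of_add_bdry d hd z.2 ha hwa
  refine ⟨QuotientAddGroup.mk ⟨a, haZ⟩, ?_⟩
  rw [inducedRelMap, QuotientAddGroup.map_mk, QuotientAddGroup.eq_iff_sub_mem,
    AddSubgroup.mem_addSubgroupOf]
  show a - (z : C n) ∈ ((K (n + 1)).map (d n) ⊔ M n) ⊓ relZ d K M n
  refine AddSubgroup.mem_inf.2 ⟨?_, sub_mem (relZ_mono d hLK (fun n => le_refl (M n)) n haZ) z.2⟩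
  rw [show a - (z : C n) = -d n w by rw [← hwa]; abel]
  exact AddSubgroup.mem_sup_left (neg_mem (AddSubgroup.mem_map_of_mem _ hw))

end RelativeHomology

instance AddSubgroup.moduleFinite_int {M : Type*} [AddCommGroup M] [Module.Finite ℤ M]
    (S : AddSubgroup M) : Module.Finite ℤ S :=
  Module.Finite.iff_fg.mpr (IsNoetherian.noetherian S.toIntSubmodule)

instance QuotientAddGroup.moduleFinite_int {M : Type*} [AddCommGroup M] [Module.Finite ℤ M]
    (S : AddSubgroup M) : Module.Finite ℤ (M ⧸ S) :=
  Module.Finite.of_surjective (QuotientAddGroup.mk' S).toIntLinearMap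
    (QuotientAddGroup.mk'_surjective S)

theorem finrank_le_finrank_add_finrank_of_ker_le_range {R M₁ M₂ M₃ : Type*} [CommRing R]
    [IsDomain R] [AddCommGroup M₁] [AddCommGroup M₂] [AddCommGroup M₃] [Module R M₁]
    [Module R M₂] [Module R M₃] [Module.Finite R M₁] [Module.Finite R M₂] [Module.Finite R M₃]
    (f : M₁ →ₗ[R] M₂) (g : M₃ →ₗ[R] M₁) (h : LinearMap.ker f ≤ LinearMap.range g) :
    Module.finrank R M₁ ≤ Module.finrank R M₂ + Module.finrank R M₃ := by
  have rank_nullity := (LinearMap.ker f).finrank_quotient_add_finrank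
  rw [f.quotKerEquivRange.finrank_eq] at rank_nullity
  have range_f_le := Submodule.finrank_le (LinearMap.range f)
  have ker_f_le := Submodule.finrank_mono h
  have range_g_le := LinearMap.finrank_range_le g
  omega

theorem rank_relative_embedded_homology_subadditive_general
    (V : Type) [LinearOrder V] [Fintype V]
    (H A B : Set (Finset V))
    (hB : B ⊆ A) (hA : A ⊆ H) (n : ℕ) :
    Module.finrank ℤ
        (relH (bdry V ℤ) (InfC (bdry V ℤ) fun m => chainsOn V ℤ H m)
          (InfC (bdry V ℤ) fun m => chainsOn V ℤ B m) n) ≤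
      Module.finrank ℤ
          (relH (bdry V ℤ) (InfC (bdry V ℤ) fun m => chainsOn V ℤ H m)
            (InfC (bdry V ℤ) fun m => chainsOn V ℤ A m) n) +
        Module.finrank ℤ
          (relH (bdry V ℤ) (InfC (bdry V ℤ) fun m => chainsOn V ℤ A m)
            (InfC (bdry V ℤ) fun m => chainsOn V ℤ B m) n) := by
  have hBA := InfC_mono (bdry V ℤ) fun m => chainsOn_mono V ℤ hB m
  have hAH := InfC_mono (bdry V ℤ) fun m => chainsOn_mono V ℤ hA m
  exact finrank_le_finrank_add_finrank_of_ker_le_range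
    (inducedRelMap (bdry V ℤ) (fun m => le_rfl) hBA n).toIntLinearMap
    (inducedRelMap (bdry V ℤ) hAH (fun m => le_rfl) n).toIntLinearMap
    (ker_inducedRelMap_le_range (bdry V ℤ) bdry_bdry hBA hAH n)

/-- For a hypergraph triple `B ⊆ A ⊆ H` (integer coefficients), the ranks
of relative embedded homology satisfy
`rank H_n(H, B) ≤ rank H_n(H, A) + rank H_n(A, B)` for all `n ≥ 0`. -/
theorem rank_relative_embedded_homology_subadditive
    (V : Type) [LinearOrder V] [Fintype V]
    (H A B : Set (Finset V)) (hH : ∀ σ ∈ H, σ.Nonempty)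
    (hB : B ⊆ A) (hA : A ⊆ H) (n : ℕ) :
    Module.finrank ℤ
        (relH (bdry V ℤ) (InfC (bdry V ℤ) fun m => chainsOn V ℤ H m)
          (InfC (bdry V ℤ) fun m => chainsOn V ℤ B m) n) ≤
      Module.finrank ℤ
          (relH (bdry V ℤ) (InfC (bdry V ℤ) fun m => chainsOn V ℤ H m)
            (InfC (bdry V ℤ) fun m => chainsOn V ℤ A m) n) +
        Module.finrank ℤ
          (relH (bdry V ℤ) (InfC (bdry V ℤ) fun m => chainsOn V ℤ A m)
            (InfC (bdry V ℤ) fun m => chainsOn V ℤ B m) n) :=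
  rank_relative_embedded_homology_subadditive_general V H A B hB hA n
end
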